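/- arXiv:2012.00570 — 3 statements merged into one kernel-verified Lean document; each statement's English description precedes it below -/
import Mathlib

section
/- Let p be a prime, q = p^m, and ζ_p a primitive p-th root of unity in an algebraic closure of Q_p, with π := 1 - ζ_p (so π^{p-1} = -p up to unit; indeed one may fix π with π^{p-1} = -p and ζ_p = 1 - π). For p ≥ 3 with m ≥ 1, or p = 2 with m ≥ 2, the Kloosterman sum Kl_q(t) := Σ_{x ∈ F_q^*} ζ_p^{Tr_{F_q/F_p}(x + t/x)} satisfies -Kl_q(t) ≡ 1 (mod π²) in Z_p[π], for every t ∈ F_q^*. -/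
lemma aux_pow (R : Type*) [CommRing R] (π : R) (n : ℕ) :
    ∃ c : R, (1 - π) ^ n = 1 - n * π + π ^ 2 * c := by
  induction n with
  | zero => exact ⟨0, by ring⟩
  | succ k ih =>
    obtain ⟨c, hc⟩ := ih
    exact ⟨c + k - π * c, by rw [pow_succ, hc]; push_cast; ring⟩

/-- Let `q = p ^ m` with `p ≥ 3, m ≥ 1` or `p = 2, m ≥ 2`.  In a commutative ring `R`
containing `π` with `π ^ (p - 1) = -p` and `ζ_p := 1 - π` a primitive `p`-th root of unity,
the Kloosterman sum `Kl_q(t) = ∑_{x ∈ F_q^*} ζ_p ^ Tr(x + t/x)` satisfies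
`-Kl_q(t) ≡ 1 (mod π²)`. -/
theorem stmt1 (p m : ℕ) [Fact p.Prime]
    (h : (3 ≤ p ∧ 1 ≤ m) ∨ (p = 2 ∧ 2 ≤ m))
    (K : Type*) [Field K] [Fintype K] [DecidableEq K] [Algebra (ZMod p) K]
    (hcard : Fintype.card K = p ^ m)
    (R : Type*) [CommRing R] (π : R) (hπ : π ^ (p - 1) = -(p : R))
    (hζ : IsPrimitiveRoot (1 - π) p)
    (t : Kˣ) :
    π ^ 2 ∣
      (-(∑ x : Kˣ, (1 - π) ^ (Algebra.trace (ZMod p) K ((x : K) + (t : K) * (x : K)⁻¹)).val) - 1) := by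
  have hp2 : 2 ≤ p := (Fact.out : p.Prime).two_le
  -- q ≥ 3
  have hq3 : 3 ≤ Fintype.card K := by
    rw [hcard]
    rcases h with ⟨h3, hm⟩ | ⟨rfl, hm⟩
    · calc 3 ≤ p ^ 1 := by simpa using h3
        _ ≤ p ^ m := Nat.pow_le_pow_right (by omega) hm
    · calc 3 ≤ 2 ^ 2 := by norm_num
        _ ≤ 2 ^ m := Nat.pow_le_pow_right (by omega) hm
  set a : Kˣ → ℕ := fun x => (Algebra.trace (ZMod p) K ((x : K) + (t : K) * (x : K)⁻¹)).val with ha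
  -- sum of traces is 0 mod p
  have hsum1 : ∑ x : Kˣ, (x : K) = 0 := by
    have := FiniteField.sum_pow_units K 1
    have hnd : ¬ (Fintype.card K - 1 ∣ 1) := by
      intro hd
      have := Nat.le_of_dvd one_pos hd
      omega
    simpa [hnd] using this
  have hsuminv : ∑ x : Kˣ, ((x : K))⁻¹ = 0 := by
    have : ∑ x : Kˣ, ((x⁻¹ : Kˣ) : K) = ∑ x : Kˣ, (x : K) :=
      Fintype.sum_equiv (Equiv.inv Kˣ) _ _ (fun x => rfl)
    simpa [hsum1] using this
  have htr0 : ∑ x : Kˣ, Algebra.trace (ZMod p) K ((x : K) + (t : K) * (x : K)⁻¹) = 0 := by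
    rw [← map_sum]
    rw [Finset.sum_add_distrib, ← Finset.mul_sum, hsum1, hsuminv]
    simp
  have hpS : p ∣ ∑ x : Kˣ, a x := by
    have : ((∑ x : Kˣ, a x : ℕ) : ZMod p) = 0 := by
      push_cast
      simp only [ha, ZMod.natCast_val, ZMod.cast_id]
      exact htr0
    exact (ZMod.natCast_eq_zero_iff _ _).mp this
  obtain ⟨k, hk⟩ := hpS
  -- expand each term
  have key : ∀ x : Kˣ, ∃ c : R, (1 - π) ^ (a x) = 1 - (a x) * π + π ^ 2 * c :=
    fun x => aux_pow R π (a x)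
  choose c hc using key
  have hEXP : (∑ x : Kˣ, (1 - π) ^ (a x))
      = (Fintype.card Kˣ : R) - ((∑ x : Kˣ, a x : ℕ) : R) * π + π ^ 2 * ∑ x : Kˣ, c x := by
    simp_rw [hc]
    rw [Finset.sum_add_distrib, Finset.sum_sub_distrib, ← Finset.mul_sum]
    push_cast
    rw [← Finset.sum_mul]
    simp [Finset.card_univ]
  -- π² ∣ p
  have hdvdp : π ^ 2 ∣ π * (p : R) := by
    rw [← neg_neg (p : R), ← hπ, mul_neg, ← pow_succ']
    exact (dvd_neg).mpr (pow_dvd_pow π (by omega))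
  have hdvdq : π ^ 2 ∣ ((p ^ m : ℕ) : R) := by
    have : ((p ^ m : ℕ) : R) = (-(π ^ (p-1))) ^ m := by rw [hπ]; push_cast; ring
    rw [this]
    rcases h with ⟨h3, hm⟩ | ⟨rfl, hm⟩
    · calc π ^ 2 ∣ (π ^ (p-1)) ^ m := by
            rw [← pow_mul]; exact pow_dvd_pow π (le_trans (by norm_num) (Nat.mul_le_mul (by omega : 2 ≤ p - 1) hm))
        _ ∣ (-(π ^ (p-1))) ^ m := by
            rcases neg_pow (π ^ (p-1)) m with _
            rw [neg_pow]
            exact Dvd.dvd.mul_left dvd_rfl _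
    · calc π ^ 2 ∣ (π ^ (2-1)) ^ m := by
            rw [← pow_mul]; exact pow_dvd_pow π (by omega)
        _ ∣ (-(π ^ (2-1))) ^ m := by
            rw [neg_pow]; exact Dvd.dvd.mul_left dvd_rfl _
  -- finish
  rw [hEXP]
  have hcardU : (Fintype.card Kˣ : R) = ((p ^ m : ℕ) : R) - 1 := by
    rw [Fintype.card_units, hcard]
    have : 1 ≤ p ^ m := Nat.one_le_pow _ _ (by omega)
    push_cast [Nat.cast_sub this]
    ring
  rw [hcardU, hk]
  have h1 : π ^ 2 ∣ π * ((p * k : ℕ) : R) := by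
    push_cast
    rw [← mul_assoc]
    exact hdvdp.mul_right _
  have : -(((p ^ m : ℕ) : R) - 1 - ((p * k : ℕ) : R) * π + π ^ 2 * ∑ x : Kˣ, c x) - 1
      = -((p ^ m : ℕ) : R) + π * ((p * k : ℕ) : R) - π ^ 2 * ∑ x : Kˣ, c x := by ring
  rw [this]
  exact dvd_sub (dvd_add (hdvdq.neg_right) h1) (Dvd.intro _ rfl)
end

section
/- Let q = 2^m with m ≥ 2 and let E_t be the elliptic curve over F_q with affine equation Y² + XY = X³ + tX for t ∈ F_q^*. Then -Kl_q(t) = q + 1 - #E_t(F_q), where Kl_q(t) = Σ_{x ∈ F_q^*} (-1)^{Tr_{F_q/F_2}(x + t/x)}. -/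
/-!
On `E_t` the line `x = 0` meets the curve only in `(0, 0)`. For `x ≠ 0` the substitution
`y = x z` turns the equation into the Artin–Schreier equation `z² + z = x + t / x`. In
characteristic two `z ↦ z² + z` is additive with kernel `{0, 1}`, so its image has index two; it
lies in the kernel of the trace because `Tr (z²) = Tr z`, hence equals it. So the equation has
`1 + (-1) ^ Tr (x + t / x)` solutions, and summing over `x`, adding `(0, 0)` and the point at
infinity gives `#E_t = 1 + (q - 1) + Kl_q(t) + 1`. The discriminant of `E_t` is `t² ≠ 0`, so all
these affine solutions are nonsingular points.
-/

open Finset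

namespace CharTwo

section ArtinSchreier

variable (R : Type*) [CommRing R] [CharP R 2]

def artinSchreier : R →+ R where
  toFun z := z ^ 2 + z
  map_zero' := by simp
  map_add' a b := by simp only [add_sq]; ring

variable {R}

theorem artinSchreier_apply (z : R) : artinSchreier R z = z ^ 2 + z := rfl

theorem sq_add_self_eq_zero_iff [NoZeroDivisors R] {z : R} : z ^ 2 + z = 0 ↔ z = 0 ∨ z = 1 := by
  rw [show z ^ 2 + z = z * (z + 1) by ring, mul_eq_zero, CharTwo.add_eq_zero]

theorem natCard_ker_artinSchreier [IsDomain R] : Nat.card (artinSchreier R).ker = 2 := by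
  have hker : ((artinSchreier R).ker : Set R) = {0, 1} := by
    ext z
    simp [artinSchreier_apply, sq_add_self_eq_zero_iff]
  rw [← SetLike.coe_sort_coe, hker, Nat.card_coe_set_eq, Set.ncard_pair zero_ne_one]

end ArtinSchreier

end CharTwo

namespace FiniteField

open CharTwo

variable {F : Type*} [Field F] [Fintype F] [Algebra (ZMod 2) F]

theorem trace_zmod_two_sq (z : F) :
    Algebra.trace (ZMod 2) F (z ^ 2) = Algebra.trace (ZMod 2) F z := by
  simpa using Algebra.trace_eq_of_algEquiv (frobeniusAlgEquivOfAlgebraic (ZMod 2) F) z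

variable [CharP F 2]

theorem range_artinSchreier :
    (artinSchreier F).range = (Algebra.trace (ZMod 2) F).toAddMonoidHom.ker := by
  set T := (Algebra.trace (ZMod 2) F).toAddMonoidHom
  have hle : (artinSchreier F).range ≤ T.ker := by
    rintro _ ⟨z, rfl⟩
    simp [T, artinSchreier_apply, trace_zmod_two_sq, CharTwo.add_self_eq_zero]
  have hrange : 2 * Nat.card (artinSchreier F).range = Nat.card F := by
    rw [← natCard_ker_artinSchreier (R := F), ← AddSubgroup.index_ker,
      AddSubgroup.card_mul_index]
  have hker : Nat.card T.ker * 2 = Nat.card F := by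
    have hT : T.range = ⊤ :=
      AddMonoidHom.range_eq_top.mpr (Algebra.trace_surjective (ZMod 2) F)
    rw [← AddSubgroup.card_mul_index T.ker, AddSubgroup.index_ker, hT, AddSubgroup.card_top,
      Nat.card_zmod]
  exact AddSubgroup.eq_of_le_of_card_ge hle (by omega)

theorem card_filter_sq_add_self_eq [DecidableEq F] (c : F) :
    (#{z : F | z ^ 2 + z = c} : ℤ) = 1 + (-1) ^ (Algebra.trace (ZMod 2) F c).val := by
  have hc : c ∈ Set.range (artinSchreier F) ↔ Algebra.trace (ZMod 2) F c = 0 := by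
    rw [← AddMonoidHom.coe_range, range_artinSchreier]; rfl
  by_cases htr : Algebra.trace (ZMod 2) F c = 0
  · have hfiber : #{z : F | z ^ 2 + z = c} = #{z : F | z ^ 2 + z = 0} :=
      AddMonoidHom.card_fiber_eq_of_mem_range (artinSchreier F) (hc.mpr htr) ⟨0, map_zero _⟩
    have hzero : ({z : F | z ^ 2 + z = 0} : Finset F) = {0, 1} := by
      ext z; simp [sq_add_self_eq_zero_iff]
    rw [hfiber, hzero, card_pair zero_ne_one, htr]
    rfl
  · have hempty : ({z : F | z ^ 2 + z = c} : Finset F) = ∅ :=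
      filter_eq_empty_iff.mpr fun z _ hz => htr (hc.mp ⟨z, hz⟩)
    obtain htr1 : Algebra.trace (ZMod 2) F c = 1 := by
      generalize Algebra.trace (ZMod 2) F c = a at htr; revert a; decide
    rw [hempty, htr1]
    rfl

end FiniteField

theorem Fintype.sum_eq_add_sum_units {G₀ M : Type*} [GroupWithZero G₀] [Fintype G₀]
    [DecidableEq G₀] [AddCommMonoid M] (f : G₀ → M) :
    ∑ x, f x = f 0 + ∑ u : G₀ˣ, f u := by
  rw [Fintype.sum_eq_add_sum_compl 0, Finset.sum_subtype {0}ᶜ (p := (· ≠ 0)) (by simp),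
    ← Fintype.sum_equiv unitsEquivNeZero _ _ fun _ => rfl]
  rfl

namespace WeierstrassCurve.Affine

variable {R : Type*} [CommRing R] (W : Affine R)

def pointEquivOption : W.Point ≃ Option {p : R × R // W.Nonsingular p.1 p.2} where
  toFun
    | .zero => none
    | .some x y h => some ⟨(x, y), h⟩
  invFun
    | none => .zero
    | some ⟨_, h⟩ => .some _ _ h
  left_inv P := by cases P <;> rfl
  right_inv o := by rcases o with _ | ⟨⟨x, y⟩, h⟩ <;> rfl

theorem natCard_point [Finite R] :
    Nat.card W.Point = Nat.card {p : R × R // W.Nonsingular p.1 p.2} + 1 := by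
  rw [Nat.card_congr W.pointEquivOption, Finite.card_option]

end WeierstrassCurve.Affine

section KloostermanCurve

variable {F : Type*} [Field F]

def kloostermanCurve (t : F) : WeierstrassCurve.Affine F :=
  { a₁ := 1, a₂ := 0, a₃ := 0, a₄ := t, a₆ := 0 }

theorem kloostermanCurve_equation_iff {t x y : F} :
    (kloostermanCurve t).Equation x y ↔ y ^ 2 + x * y = x ^ 3 + t * x := by
  rw [WeierstrassCurve.Affine.equation_iff]
  simp [kloostermanCurve]

theorem kloostermanCurve_Δ [CharP F 2] (t : F) : (kloostermanCurve t).Δ = t ^ 2 := by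
  simp only [kloostermanCurve, WeierstrassCurve.Δ, WeierstrassCurve.b₂, WeierstrassCurve.b₄,
    WeierstrassCurve.b₆, WeierstrassCurve.b₈]
  -- over `ℤ` the discriminant is `t² - 64 t³`
  linear_combination (-32 * t ^ 3) * CharTwo.two_eq_zero (R := F)

variable [Fintype F] [DecidableEq F]

theorem card_fiber_kloostermanCurve_zero (t : F) :
    #{y : F | y ^ 2 + 0 * y = 0 ^ 3 + t * 0} = 1 := by
  simp [filter_eq']

theorem card_fiber_kloostermanCurve_of_ne_zero {x : F} (hx : x ≠ 0) (t : F) :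
    #{y : F | y ^ 2 + x * y = x ^ 3 + t * x} = #{z : F | z ^ 2 + z = x + t * x⁻¹} := by
  refine card_nbij' (· * x⁻¹) (· * x) ?_ ?_ ?_ ?_
  · intro y hy
    simp only [coe_filter, Set.mem_ofPred_eq, mem_univ, true_and] at hy ⊢
    field_simp
    linear_combination hy
  · intro z hz
    simp only [coe_filter, Set.mem_ofPred_eq, mem_univ, true_and] at hz ⊢
    field_simp at hz
    linear_combination x * hz
  · intro y _; simp [hx]
  · intro z _; simp [hx]

variable [CharP F 2]

theorem natCard_point_kloostermanCurve {t : F} (ht : t ≠ 0) :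
    Nat.card (kloostermanCurve t).Point =
      ∑ x : F, #{y : F | y ^ 2 + x * y = x ^ 3 + t * x} + 1 := by
  have hΔ : (kloostermanCurve t).Δ ≠ 0 := by
    rw [kloostermanCurve_Δ]; exact pow_ne_zero 2 ht
  have hpoints : {p : F × F // (kloostermanCurve t).Nonsingular p.1 p.2} ≃
      {p : F × F // p.2 ^ 2 + p.1 * p.2 = p.1 ^ 3 + t * p.1} :=
    Equiv.subtypeEquivRight fun _ =>
      ((kloostermanCurve t).equation_iff_nonsingular_of_Δ_ne_zero hΔ).symm.trans
        kloostermanCurve_equation_iff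
  rw [WeierstrassCurve.Affine.natCard_point, Nat.card_congr hpoints, Nat.card_eq_fintype_card,
    Fintype.card_subtype, ← univ_product_univ, card_filter, sum_product]
  simp only [card_filter]

theorem natCard_point_kloostermanCurve_eq_sum_units [Algebra (ZMod 2) F] {t : F} (ht : t ≠ 0) :
    (Nat.card (kloostermanCurve t).Point : ℤ) = Fintype.card F + 1 +
      ∑ x : Fˣ, (-1 : ℤ) ^ (Algebra.trace (ZMod 2) F ((x : F) + t * (x : F)⁻¹)).val := by
  have hunits : (Fintype.card Fˣ : ℤ) = Fintype.card F - 1 := by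
    rw [Fintype.card_units, Nat.cast_sub Fintype.card_pos, Nat.cast_one]
  rw [natCard_point_kloostermanCurve ht, Fintype.sum_eq_add_sum_units,
    card_fiber_kloostermanCurve_zero]
  push_cast
  simp only [fun u : Fˣ => card_fiber_kloostermanCurve_of_ne_zero u.ne_zero t,
    FiniteField.card_filter_sq_add_self_eq, sum_add_distrib, sum_const, card_univ,
    Int.nsmul_eq_mul, mul_one, hunits]
  ring

end KloostermanCurve

theorem stmt5_general (m : ℕ) (K : Type*) [Field K] [Fintype K] [DecidableEq K]
    [Algebra (ZMod 2) K] (hcard : Fintype.card K = 2 ^ m) (t : Kˣ)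
    (E : WeierstrassCurve.Affine K)
    (hE : E = { a₁ := 1, a₂ := 0, a₃ := 0, a₄ := (t : K), a₆ := 0 }) :
    -(∑ x : Kˣ, (-1 : ℤ) ^ (Algebra.trace (ZMod 2) K ((x : K) + (t : K) * (x : K)⁻¹)).val) =
      (2 ^ m + 1 : ℤ) - Nat.card E.Point := by
  have : CharP K 2 := charP_of_injective_algebraMap (algebraMap (ZMod 2) K).injective 2
  rw [show E = kloostermanCurve (t : K) from hE,
    natCard_point_kloostermanCurve_eq_sum_units t.ne_zero, hcard]
  push_cast
  ring

/-- Let `q = 2 ^ m` with `m ≥ 2` and let `E_t` be the elliptic curve over `F_q` with affine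
equation `Y² + XY = X³ + tX`, for `t ∈ F_q^*`.  Then `-Kl_q(t) = q + 1 - #E_t(F_q)`, where
`Kl_q(t) = ∑_{x ∈ F_q^*} (-1) ^ Tr(x + t/x)` and `#E_t(F_q)` counts the affine points
together with the point at infinity. -/
theorem stmt5 (m : ℕ) (hm : 2 ≤ m) (K : Type*) [Field K] [Fintype K] [DecidableEq K]
    [Algebra (ZMod 2) K] (hcard : Fintype.card K = 2 ^ m) (t : Kˣ)
    (E : WeierstrassCurve.Affine K)
    (hE : E = { a₁ := 1, a₂ := 0, a₃ := 0, a₄ := (t : K), a₆ := 0 }) :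
    -(∑ x : Kˣ, (-1 : ℤ) ^ (Algebra.trace (ZMod 2) K ((x : K) + (t : K) * (x : K)⁻¹)).val) =
      (2 ^ m + 1 : ℤ) - Nat.card E.Point :=
  stmt5_general m K hcard t E hE
end

section
/- The unit root L-function satisfies the formal identity L_unit(κ, s) = L(Sym^{∞,κ} Kl, s) / L(Sym^{∞,κ-2} Kl, ps) for all κ ∈ Z_p, where L_unit(κ,s) = Π_t (1 - π_0(t)^κ s^{deg t})^{-1} and L(Sym^{∞,κ} Kl, s) = Π_t Π_{i=0}^{∞} (1 - π_0(t)^{κ-i}π_1(t)^i s^{deg t})^{-1}. -/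
/-!
Split the numerator product over `(t, i)` into its `i = 0` factors, which form `LU`, and its
`i ≥ 1` factors. Since `π₀^(κ-i-1) π₁^(i+1) = π₀^(κ-2-i) π₁^i ⋅ π₀ π₁` and `π₀ π₁ = p^deg t`,
the `(i+1)`-th numerator factor at `t` is the `i`-th denominator factor, so the `i ≥ 1` part is `Ld`.
-/

open PowerSeries Finset

/-- The product (coefficientwise) topology on formal power series, from the topology of the
coefficient ring; infinite products of power series below are taken in this topology. -/
noncomputable instance powerSeriesTopology (R : Type*) [TopologicalSpace R] :
    TopologicalSpace (PowerSeries R) :=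
  inferInstanceAs (TopologicalSpace ((Unit →₀ ℕ) → R))

instance (R : Type*) [TopologicalSpace R] [T2Space R] : T2Space (PowerSeries R) :=
  PowerSeries.WithPiTopology.instT2Space R

instance (R : Type*) [Semiring R] [TopologicalSpace R] [IsTopologicalSemiring R] :
    IsTopologicalSemiring (PowerSeries R) :=
  PowerSeries.WithPiTopology.instIsTopologicalSemiring R

theorem HasProd.of_snd_zero_mul_snd_succ {M ι : Type*} [CommMonoid M] [TopologicalSpace M]
    [ContinuousMul M] {f : ι × ℕ → M} {a b : M} (h₀ : HasProd (fun i => f (i, 0)) a)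
    (h₁ : HasProd (fun x : ι × ℕ => f (x.1, x.2 + 1)) b) : HasProd f (a * b) := by
  have hzero : Function.Injective fun i : ι => (i, 0) := fun _ _ h => (Prod.ext_iff.1 h).1
  have hsucc : Function.Injective fun x : ι × ℕ => (x.1, x.2 + 1) := fun x y h => by
    simp only [Prod.ext_iff, add_left_inj] at h
    exact Prod.ext h.1 h.2
  have hcompl : IsCompl (Set.range fun i : ι => (i, 0))
      (Set.range fun x : ι × ℕ => (x.1, x.2 + 1)) := by
    refine ⟨Set.disjoint_left.2 ?_, codisjoint_iff.2 (Set.eq_univ_of_forall ?_)⟩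
    · rintro _ ⟨i, rfl⟩ ⟨x, hx⟩
      simp [Prod.ext_iff] at hx
    · rintro ⟨i, _ | n⟩
      exacts [Or.inl ⟨i, rfl⟩, Or.inr ⟨(i, n), rfl⟩]
  exact (hzero.hasProd_range_iff.2 h₀).mul_isCompl hcompl (hsucc.hasProd_range_iff.2 h₁)

theorem coe_sub_succ_mul_pow_succ {A R : Type*} [AddCommGroupWithOne A] [CommMonoid R] {π₀ : Rˣ}
    {u : A → Rˣ} (hu_add : ∀ a b, u (a + b) = u a * u b) (hu_one : u 1 = π₀) (κ : A) (π₁ : R)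
    (i : ℕ) : (u (κ - (i + 1 : ℕ)) : R) * π₁ ^ (i + 1) = u (κ - 2 - i) * π₁ ^ i * (π₀ * π₁) := by
  have : κ - ((i + 1 : ℕ) : A) = κ - 2 - i + 1 := by
    rw [← one_add_one_eq_two]; push_cast; abel
  rw [this, hu_add, hu_one, Units.val_mul, pow_succ]
  ac_rfl

/-- The `ℤ_p`-powers `κ ↦ π₀(t)^κ` of the unit root are encoded by the homomorphisms `u t`,
which agree with the usual powers on `ℕ`. -/
theorem stmt9_general (p : ℕ) [Fact p.Prime] (κ : ℤ_[p])
    (I : Type*) (deg : I → ℕ)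
    (π₀ : I → ℤ_[p]ˣ) (π₁ : I → ℤ_[p])
    (hπ : ∀ t, (π₀ t : ℤ_[p]) * π₁ t = (p : ℤ_[p]) ^ deg t)
    (u : I → ℤ_[p] → ℤ_[p]ˣ)
    (hu_add : ∀ t a b, u t (a + b) = u t a * u t b)
    (hu_nat : ∀ t (n : ℕ), u t (n : ℤ_[p]) = π₀ t ^ n)
    (LU Ln Ld : PowerSeries ℤ_[p])
    (hLU : HasProd (fun t : I =>
      1 - PowerSeries.C (R := ℤ_[p]) ((u t κ : ℤ_[p])) * X ^ deg t) LU)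
    (hLn : HasProd (fun ti : I × ℕ =>
      1 - PowerSeries.C (R := ℤ_[p]) ((u ti.1 (κ - (ti.2 : ℕ)) : ℤ_[p]) * π₁ ti.1 ^ ti.2) *
        X ^ deg ti.1) Ln)
    (hLd : HasProd (fun ti : I × ℕ =>
      1 - PowerSeries.C (R := ℤ_[p]) ((u ti.1 (κ - 2 - (ti.2 : ℕ)) : ℤ_[p]) * π₁ ti.1 ^ ti.2 *
          (p : ℤ_[p]) ^ deg ti.1) *
        X ^ deg ti.1) Ld) :
    LU * Ld = Ln := by
  refine HasProd.unique (HasProd.of_snd_zero_mul_snd_succ ?_ ?_) hLn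
  · simpa using hLU
  · convert hLd using 5 with ti
    rw [← hπ, coe_sub_succ_mul_pow_succ (hu_add ti.1) (by simpa using hu_nat ti.1 1)]

/-- Modelling the closed points of `𝔾_m/F_p` by an index type `I` with degree function `deg`,
let `π₀(t) ∈ ℤ_pˣ` be the unit root (a 1-unit, whose `ℤ_p`-powers are encoded by the
continuous homomorphisms `κ ↦ u t κ` restricting to the usual powers on `ℕ`) and `π₁(t)` the
non-unit root, with `π₀(t) π₁(t) = p^{deg t}`.  If `LU` is the product over `t` of
`(1 - π₀(t)^κ s^{deg t})`, `Ln` the product over `(t, i)` of `(1 - π₀(t)^{κ-i} π₁(t)^i s^{deg t})`,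
and `Ld` the product over `(t, i)` of `(1 - π₀(t)^{κ-2-i} π₁(t)^i p^{deg t} s^{deg t})`
(the denominator evaluated at `p s`), then `LU ⬝ Ld = Ln`; equivalently
`L_unit(κ, s) = L(Sym^{∞,κ} Kl, s) / L(Sym^{∞,κ-2} Kl, p s)`, the `L`-functions being the
inverses of these products. -/
theorem stmt9 (p : ℕ) [Fact p.Prime] (κ : ℤ_[p])
    (I : Type*) (deg : I → ℕ) (hdeg : ∀ t, 1 ≤ deg t)
    (hfin : ∀ n : ℕ, {t : I | deg t = n}.Finite)
    (π₀ : I → ℤ_[p]ˣ) (π₁ : I → ℤ_[p])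
    (hπ : ∀ t, (π₀ t : ℤ_[p]) * π₁ t = (p : ℤ_[p]) ^ deg t)
    (u : I → ℤ_[p] → ℤ_[p]ˣ)
    (hu_add : ∀ t a b, u t (a + b) = u t a * u t b)
    (hu_nat : ∀ t (n : ℕ), u t (n : ℤ_[p]) = π₀ t ^ n)
    (hu_cont : ∀ t, Continuous fun a => ((u t a : ℤ_[p]) : ℤ_[p]))
    (LU Ln Ld : PowerSeries ℤ_[p])
    (hLU : HasProd (fun t : I =>
      1 - PowerSeries.C (R := ℤ_[p]) ((u t κ : ℤ_[p])) * X ^ deg t) LU)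
    (hLn : HasProd (fun ti : I × ℕ =>
      1 - PowerSeries.C (R := ℤ_[p]) ((u ti.1 (κ - (ti.2 : ℕ)) : ℤ_[p]) * π₁ ti.1 ^ ti.2) *
        X ^ deg ti.1) Ln)
    (hLd : HasProd (fun ti : I × ℕ =>
      1 - PowerSeries.C (R := ℤ_[p]) ((u ti.1 (κ - 2 - (ti.2 : ℕ)) : ℤ_[p]) * π₁ ti.1 ^ ti.2 *
          (p : ℤ_[p]) ^ deg ti.1) *
        X ^ deg ti.1) Ld) :
    LU * Ld = Ln :=
  stmt9_general p κ I deg π₀ π₁ hπ u hu_add hu_nat LU Ln Ld hLU hLn hLd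
end
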